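/- arXiv:2102.05419 — 2 statements merged into one kernel-verified Lean document; each statement's English description precedes it below -/
import Mathlib

section
/- Let M = ⟨V, D, ·_M⟩ be a Σ-PNmatrix, Ax ⊆ L_Σ(P), and M♭_Ax the Σ-PNmatrix with values V♭ = {(x, A) ∈ V × L_Σ(P) : if A ∈ Ax^inst then x ∈ D}, designated values D♭ = (D × L_Σ(P)) ∩ V♭, and ©_{M♭}((x₁, A₁),…,(x_k, A_k)) = {(x, ©(A₁,…,A_k)) ∈ V♭ : x ∈ ©_M(x₁,…,x_k)}. Then M♭_Ax is a refinement of the E-expansion of M for the expansion function E(x) = {x} × L_Σ(P), whose contraction Ẽ satisfies Ẽ(x, A) = x; in particular, for every M♭_Ax-valuation v♭, the composite Ẽ ∘ v♭ is an M-valuation satisfying (Ẽ ∘ v♭)(Ax^inst) ⊆ D. -/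
set_option autoImplicit false

namespace PNPaper

/-- Formulas over a propositional signature given by a type `C` of connectives
with arity function `ar`, generated over a set (type) `P` of sentential variables. -/
inductive Fm (C : Type) (ar : C → ℕ) (P : Type) : Type where
  | var : P → Fm C ar P
  | app : (c : C) → (Fin (ar c) → Fm C ar P) → Fm C ar P

variable {C : Type} {ar : C → ℕ} {P Q : Type} {V W : Type}

/-- Substitution, extended to the unique endomorphism of the formula algebra. -/
def Fm.subst (σ : Q → Fm C ar P) : Fm C ar Q → Fm C ar P
  | .var q => σ q
  | .app c As => .app c (fun i => (As i).subst σ)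

/-- The set of substitution instances of formulas in `Ax`. -/
def instSet (Ax : Set (Fm C ar P)) : Set (Fm C ar P) :=
  {B | ∃ A ∈ Ax, ∃ σ : P → Fm C ar P, B = A.subst σ}

/-- A formula uses only connectives from `S`. -/
def Fm.usesOnly (S : Set C) : Fm C ar P → Prop
  | .var _ => True
  | .app c As => c ∈ S ∧ ∀ i, (As i).usesOnly S

/-- All variables of the formula belong to `Vs`. -/
def Fm.varsIn (Vs : Set P) : Fm C ar P → Prop
  | .var p => p ∈ Vs
  | .app _ As => ∀ i, (As i).varsIn Vs

/-- A Σ-PNmatrix: a set of truth-values (carrier), designated values,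
and a (possibly partial, non-deterministic) truth-table for each connective. -/
structure Mat (C : Type) (ar : C → ℕ) (V : Type) where
  carrier : Set V
  desig : Set V
  int : (c : C) → (Fin (ar c) → V) → Set V

/-- Well-formedness: `D ⊆ V` and truth-tables take values in `V`. -/
def Mat.WF (M : Mat C ar V) : Prop :=
  M.desig ⊆ M.carrier ∧
  ∀ (c : C) (xs : Fin (ar c) → V), (∀ i, xs i ∈ M.carrier) → M.int c xs ⊆ M.carrier

/-- An `M`-valuation. -/
def Mat.IsVal (M : Mat C ar V) (v : Fm C ar P → V) : Prop :=
  (∀ A, v A ∈ M.carrier) ∧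
  ∀ (c : C) (As : Fin (ar c) → Fm C ar P), v (.app c As) ∈ M.int c (fun i => v (As i))

/-- The (single conclusion) consequence relation `⊢_M`. -/
def Mat.Conseq (M : Mat C ar V) (Γ : Set (Fm C ar P)) (A : Fm C ar P) : Prop :=
  ∀ v : Fm C ar P → V, M.IsVal v → (∀ B ∈ Γ, v B ∈ M.desig) → v A ∈ M.desig

/-- The strengthening `⊢_M^Ax` of `⊢_M` with (schema) axioms `Ax`. -/
def Mat.ConseqAx (M : Mat C ar V) (Ax Γ : Set (Fm C ar P)) (A : Fm C ar P) : Prop :=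
  M.Conseq (Γ ∪ instSet Ax) A

/-- The multiple-conclusion consequence relation `▷_M`. -/
def Mat.MConseq (M : Mat C ar V) (Γ Δ : Set (Fm C ar P)) : Prop :=
  ∀ v : Fm C ar P → V, M.IsVal v → (∀ B ∈ Γ, v B ∈ M.desig) → ∃ B ∈ Δ, v B ∈ M.desig

/-- The set `A_M(x₁,…,xₙ)` of possible values of `A` when `pᵢ ↦ xᵢ`. -/
def Mat.fmSet (M : Mat C ar V) (n : ℕ) (A : Fm C ar ℕ) (xs : Fin n → V) : Set V :=
  {y | ∃ v : Fm C ar ℕ → V, M.IsVal v ∧ (∀ i : Fin n, v (Fm.var i.1) = xs i) ∧ v A = y}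

/-- `M` is `S`-deterministic. -/
def Mat.DetOn (M : Mat C ar V) (S : Set C) : Prop :=
  ∀ c ∈ S, ∀ xs : Fin (ar c) → V, (∀ i, xs i ∈ M.carrier) → (M.int c xs).Subsingleton

/-- `M` is total. -/
def Mat.Total (M : Mat C ar V) : Prop :=
  ∀ (c : C) (xs : Fin (ar c) → V), (∀ i, xs i ∈ M.carrier) → (M.int c xs).Nonempty

/-- `M'` is a refinement of `M`. -/
def IsRefinement (M' M : Mat C ar V) : Prop :=
  M'.carrier ⊆ M.carrier ∧
  M'.desig = M.desig ∩ M'.carrier ∧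
  ∀ (c : C) (xs : Fin (ar c) → V), (∀ i, xs i ∈ M'.carrier) → M'.int c xs ⊆ M.int c xs

/-- `E` is an expansion function for `M` with contraction `ct`:
the sets `E x` (for truth-values `x` of `M`) are non-empty and `ct` picks, for each
element of `E x`, the unique `x` it expands (this forces pairwise disjointness). -/
def IsExpansion (M : Mat C ar V) (E : V → Set W) (ct : W → V) : Prop :=
  (∀ x ∈ M.carrier, (E x).Nonempty) ∧
  (∀ x ∈ M.carrier, ∀ y ∈ E x, ct y = x)

/-- The `E`-expansion of `M`. -/
def expMat (M : Mat C ar V) (E : V → Set W) (ct : W → V) : Mat C ar W where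
  carrier := ⋃ x ∈ M.carrier, E x
  desig := ⋃ x ∈ M.desig, E x
  int := fun c ys => ⋃ x ∈ M.int c (fun i => ct (ys i)), E x

/-- A rexpansion of `M` is a refinement of some `E`-expansion of `M`. -/
def IsRexpansion (M' : Mat C ar W) (M : Mat C ar V) : Prop :=
  ∃ (E : V → Set W) (ct : W → V), IsExpansion M E ct ∧ IsRefinement M' (expMat M E ct)

/-- The truth-values of `M♭_Ax`: pairs `(x, A)` such that `x ∈ D` whenever `A ∈ Ax^inst`. -/
def flatCarrier {C : Type} {ar : C → ℕ} {V : Type} (M : Mat C ar V)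
    (Ax : Set (Fm C ar ℕ)) : Set (V × Fm C ar ℕ) :=
  {xa | xa.1 ∈ M.carrier ∧ (xa.2 ∈ instSet Ax → xa.1 ∈ M.desig)}

/-- The PNmatrix `M♭_Ax` of Theorem `flat`. -/
def flatMat {C : Type} {ar : C → ℕ} {V : Type} (M : Mat C ar V)
    (Ax : Set (Fm C ar ℕ)) : Mat C ar (V × Fm C ar ℕ) where
  carrier := flatCarrier M Ax
  desig := {xa | xa.1 ∈ M.desig} ∩ flatCarrier M Ax
  int := fun c ys =>
    {xa | xa ∈ flatCarrier M Ax ∧ xa.1 ∈ M.int c (fun i => (ys i).1) ∧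
          xa.2 = Fm.app c (fun i => (ys i).2)}

/-! The second components of an `M♭_Ax`-valuation `v` track formulas: `(v B).2` is the instance
of `B` under the substitution `p ↦ (v p).2`. Since instances of instances of `Ax` are instances
of `Ax`, the first component of `v` designates every instance of an axiom. -/

theorem Fm.subst_subst {R : Type} (σ : Q → Fm C ar P) (τ : P → Fm C ar R) (A : Fm C ar Q) :
    (A.subst σ).subst τ = A.subst (fun q => (σ q).subst τ) := by
  induction A with
  | var q => rfl
  | app c As ih => exact congrArg (Fm.app c) (funext ih)

theorem subst_mem_instSet {Ax : Set (Fm C ar P)} {B : Fm C ar P} (hB : B ∈ instSet Ax)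
    (τ : P → Fm C ar P) : B.subst τ ∈ instSet Ax := by
  obtain ⟨A, hA, σ, rfl⟩ := hB
  exact ⟨A, hA, fun p => (σ p).subst τ, Fm.subst_subst σ τ A⟩

instance [Nonempty P] : Nonempty (Fm C ar P) :=
  ⟨.var (Classical.arbitrary P)⟩

theorem mem_biUnion_singleton_prod_univ {T : Type} {S : Set V} {y : V × T} :
    y ∈ ⋃ x ∈ S, ({x} ×ˢ Set.univ : Set (V × T)) ↔ y.1 ∈ S := by
  simp

theorem isExpansion_singleton_prod_univ {T : Type} [Nonempty T] (M : Mat C ar V) :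
    IsExpansion M (fun x => ({x} ×ˢ Set.univ : Set (V × T))) Prod.fst :=
  ⟨fun x _ => ⟨(x, Classical.arbitrary T), by simp⟩, fun _ _ _ hy => hy.1⟩

section Flat

variable {M : Mat C ar V} {Ax : Set (Fm C ar ℕ)}

theorem flatMat_isRefinement :
    IsRefinement (flatMat M Ax)
      (expMat M (fun x => {x} ×ˢ (Set.univ : Set (Fm C ar ℕ))) Prod.fst) :=
  ⟨fun _ hxa => mem_biUnion_singleton_prod_univ.2 hxa.1,
    congrArg (· ∩ flatCarrier M Ax) (Set.ext fun _ => mem_biUnion_singleton_prod_univ.symm),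
    fun _ _ _ _ hxa => mem_biUnion_singleton_prod_univ.2 hxa.2.1⟩

theorem flatMat_isVal_snd {v : Fm C ar ℕ → V × Fm C ar ℕ} (hv : (flatMat M Ax).IsVal v)
    (B : Fm C ar ℕ) : (v B).2 = B.subst (fun p => (v (.var p)).2) := by
  induction B with
  | var p => rfl
  | app c As ih => exact ((hv.2 c As).2.2).trans (congrArg (Fm.app c) (funext ih))

theorem flatMat_isVal_fst {v : Fm C ar ℕ → V × Fm C ar ℕ} (hv : (flatMat M Ax).IsVal v) :
    M.IsVal (fun A => (v A).1) :=
  ⟨fun A => (hv.1 A).1, fun c As => (hv.2 c As).2.1⟩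

theorem flatMat_isVal_fst_mem_desig {v : Fm C ar ℕ → V × Fm C ar ℕ}
    (hv : (flatMat M Ax).IsVal v) {B : Fm C ar ℕ} (hB : B ∈ instSet Ax) : (v B).1 ∈ M.desig :=
  (hv.1 B).2 (flatMat_isVal_snd hv B ▸ subst_mem_instSet hB _)

end Flat

theorem stmt3_general {C : Type} {ar : C → ℕ} {V : Type}
    (M : Mat C ar V) (Ax : Set (Fm C ar ℕ)) :
    IsExpansion M (fun x => {x} ×ˢ (Set.univ : Set (Fm C ar ℕ))) Prod.fst ∧
    IsRefinement (flatMat M Ax)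
      (expMat M (fun x => {x} ×ˢ (Set.univ : Set (Fm C ar ℕ))) Prod.fst) ∧
    ∀ v : Fm C ar ℕ → V × Fm C ar ℕ, (flatMat M Ax).IsVal v →
      M.IsVal (fun A => (v A).1) ∧ ∀ B ∈ instSet Ax, (v B).1 ∈ M.desig :=
  ⟨isExpansion_singleton_prod_univ M, flatMat_isRefinement,
    fun _ hv => ⟨flatMat_isVal_fst hv, fun _ => flatMat_isVal_fst_mem_desig hv⟩⟩

/-- `M♭_Ax` is a refinement of the `E`-expansion of `M` for
`E(x) = {x} × L_Σ(P)`, whose contraction is `Ẽ(x, A) = x` (i.e. `Prod.fst`);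
in particular every `M♭_Ax`-valuation `v♭` yields an `M`-valuation `Ẽ ∘ v♭`
designating all instances of the axioms. -/
theorem stmt3 {C : Type} {ar : C → ℕ} {V : Type}
    (M : Mat C ar V) (hWF : M.WF) (Ax : Set (Fm C ar ℕ)) :
    IsExpansion M (fun x => {x} ×ˢ (Set.univ : Set (Fm C ar ℕ))) Prod.fst ∧
    IsRefinement (flatMat M Ax)
      (expMat M (fun x => {x} ×ˢ (Set.univ : Set (Fm C ar ℕ))) Prod.fst) ∧
    ∀ v : Fm C ar ℕ → V × Fm C ar ℕ, (flatMat M Ax).IsVal v →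
      M.IsVal (fun A => (v A).1) ∧ ∀ B ∈ instSet Ax, (v B).1 ∈ M.desig :=
  stmt3_general M Ax

end PNPaper
end

section
/- Let M = ⟨V, D, ·_M⟩ be a Σ-PNmatrix and Ax ⊆ L_Σ(P) satisfying the hypotheses of the ♯-construction (there is Σ^d ⊆ Σ such that M is a rexpansion of some Σ^d-deterministic PNmatrix and all formulas in Ax are Σ^d-simple). If M is monadic, then the PNmatrix M♯_Ax is also monadic. More precisely, if f^{A₁}_{v₁} ≠ f^{A₂}_{v₂} in V♯, pick w ∈ Θ_Ax with x₁ = f^{A₁}_{v₁}(w) ≠ f^{A₂}_{v₂}(w) = x₂ and a separator S ∈ L_Σ({p}) for x₁, x₂ in M; then R(p) = S(w p) is a separator for f^{A₁}_{v₁} and f^{A₂}_{v₂} in M♯_Ax. -/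
set_option autoImplicit false

namespace PNPaper

variable {C : Type} {ar : C → ℕ} {P Q : Type} {V W : Type}

/-- The 1-place connectives of the signature that are not in `Σᵈ`. -/
def UC (C : Type) (ar : C → ℕ) (Sd : Set C) : Type := {c : C // ar c = 1 ∧ c ∉ Sd}

/-- The formula `wA` obtained by prefixing `A` with the string `w ∈ U*` of
1-place connectives. -/
def prefixFm {C : Type} {ar : C → ℕ} {Sd : Set C}
    (w : List (UC C ar Sd)) (A : Fm C ar ℕ) : Fm C ar ℕ :=
  w.foldr (fun c B => Fm.app c.1 (fun _ => B)) A

/-- A set of strings is closed under taking prefixes. -/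
def PrefixClosed {α : Type} (Th : Set (List α)) : Prop :=
  ∀ s t : List α, s <+: t → t ∈ Th → s ∈ Th

/-- `B` is a `Σᵈ`-simple formula (based on some connective `c`), with all prefixes of
the strings used in its decomposition belonging to the look-ahead set `Th`:
`B = A^σ` for a structure formula `A ∈ L_{Σᵈ}({q₁,…,qₙ,r₁,…,r_m})` and a substitution
`σ` with `σ(qᵢ) = wᵢ p_{jᵢ}` and `σ(r_l) = u_l c(p₁,…,p_k)`. -/
def SimpleWithin {C : Type} {ar : C → ℕ} (Sd : Set C)
    (Th : Set (List (UC C ar Sd))) (B : Fm C ar ℕ) : Prop :=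
  ∃ (c : C) (n m : ℕ) (A : Fm C ar (Fin n ⊕ Fin m))
    (w : Fin n → List (UC C ar Sd)) (j : Fin n → Fin (ar c))
    (u : Fin m → List (UC C ar Sd)) (p : Fin (ar c) → ℕ),
      Function.Injective p ∧ A.usesOnly Sd ∧
      B = A.subst (Sum.elim
            (fun i => prefixFm (w i) (Fm.var (p (j i))))
            (fun l => prefixFm (u l) (Fm.app c (fun i => Fm.var (p i))))) ∧
      (∀ i t, t <+: w i → t ∈ Th) ∧ (∀ l t, t <+: u l → t ∈ Th)

/-- `Val_M^Ax`: the `M`-valuations designating all instances of the axioms. -/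
def ValAx {C : Type} {ar : C → ℕ} {V : Type} (M : Mat C ar V)
    (Ax : Set (Fm C ar ℕ)) : Set (Fm C ar ℕ → V) :=
  {v | M.IsVal v ∧ ∀ B ∈ instSet Ax, v B ∈ M.desig}

/-- The look-ahead function `f^A_v : Θ → V`, `f^A_v(w) = v(wA)`. -/
def fA {C : Type} {ar : C → ℕ} {V : Type} {Sd : Set C}
    (Th : Set (List (UC C ar Sd))) (v : Fm C ar ℕ → V) (A : Fm C ar ℕ) : ↥Th → V :=
  fun w => v (prefixFm w.1 A)

/-- The PNmatrix `M♯_Ax` of the ♯-construction (Theorem `theconstruction`). -/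
def sharpMat {C : Type} {ar : C → ℕ} {V : Type} {Sd : Set C}
    (M : Mat C ar V) (Ax : Set (Fm C ar ℕ)) (Th : Set (List (UC C ar Sd)))
    (hε : [] ∈ Th) : Mat C ar (↥Th → V) where
  carrier := {f | ∃ v ∈ ValAx M Ax, ∃ A, f = fA Th v A}
  desig := {f | (∃ v ∈ ValAx M Ax, ∃ A, f = fA Th v A) ∧ f ⟨[], hε⟩ ∈ M.desig}
  int := fun c fs =>
    {g | ∃ v ∈ ValAx M Ax, ∃ As : Fin (ar c) → Fm C ar ℕ,
      (∀ i, fA Th v (As i) = fs i) ∧ g = fA Th v (Fm.app c As)}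

/-- The set `S_M(x)` of possible values of the one-variable formula `S` (in the
variable `p = p₀`, here the variable `0`) when `p ↦ x`. -/
def sepSet {C : Type} {ar : C → ℕ} {V : Type} (M : Mat C ar V)
    (S : Fm C ar ℕ) (x : V) : Set V :=
  {y | ∃ v : Fm C ar ℕ → V, M.IsVal v ∧ v (Fm.var 0) = x ∧ v S = y}

/-- Two sets of truth-values are separated: one consists of designated values and
the other of undesignated ones. -/
def Separated {C : Type} {ar : C → ℕ} {V : Type} (M : Mat C ar V)
    (X Y : Set V) : Prop :=
  (X ⊆ M.desig ∧ Y ⊆ M.carrier \ M.desig) ∨ (Y ⊆ M.desig ∧ X ⊆ M.carrier \ M.desig)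

/-- `S` is a (monadic) separator for `x` and `y` in `M`. -/
def IsSeparator {C : Type} {ar : C → ℕ} {V : Type} (M : Mat C ar V)
    (S : Fm C ar ℕ) (x y : V) : Prop :=
  S.varsIn {0} ∧ (∀ z ∈ M.carrier, (sepSet M S z).Nonempty) ∧
  Separated M (sepSet M S x) (sepSet M S y)

/-- `M` is monadic: every pair of distinct truth-values has a separator. -/
def Monadic {C : Type} {ar : C → ℕ} {V : Type} (M : Mat C ar V) : Prop :=
  ∀ x ∈ M.carrier, ∀ y ∈ M.carrier, x ≠ y → ∃ S, IsSeparator M S x y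

/-! A ♯-valuation `u` evaluated at a string `t` only looks ahead: `u(wB)(t) = u(B)(tw)`, and
`u(·)(ε)` is an `M`-valuation. So if `u` sends `p` to `f`, then `u(S(wp))(ε)` is a value of `S`
in `M` at `f(w)`. Designation in `M♯_Ax` is decided at `ε`, hence the separator `S` of
`f₁(w), f₂(w)` in `M` turns into the separator `S(wp)` of `f₁, f₂` in `M♯_Ax`. -/

lemma Fm.varsIn_subst {Vs : Set P} {σ : Q → Fm C ar P} (hσ : ∀ q, (σ q).varsIn Vs) :
    ∀ B : Fm C ar Q, (B.subst σ).varsIn Vs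
  | .var q => hσ q
  | .app _ As => fun i => Fm.varsIn_subst hσ (As i)

lemma Mat.IsVal.comp_subst {M : Mat C ar V} {u : Fm C ar P → V} (hu : M.IsVal u)
    (σ : Q → Fm C ar P) : M.IsVal (fun B => u (B.subst σ)) :=
  ⟨fun B => hu.1 (B.subst σ), fun c As => hu.2 c fun i => (As i).subst σ⟩

section Prefix

variable {Sd : Set C}

lemma prefixFm_append (t w : List (UC C ar Sd)) (A : Fm C ar ℕ) :
    prefixFm (t ++ w) A = prefixFm t (prefixFm w A) :=
  List.foldr_append

lemma app_eq_prefixFm_singleton (c : UC C ar Sd) (As : Fin (ar c.1) → Fm C ar ℕ)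
    (i : Fin (ar c.1)) : Fm.app c.1 As = prefixFm [c] (As i) := by
  have : Subsingleton (Fin (ar c.1)) := by rw [c.2.1]; infer_instance
  exact congrArg (Fm.app c.1) (funext fun j => congrArg As (Subsingleton.elim j i))

lemma Fm.varsIn_prefixFm {Vs : Set ℕ} {A : Fm C ar ℕ} (hA : A.varsIn Vs) :
    ∀ w : List (UC C ar Sd), (prefixFm w A).varsIn Vs
  | [] => hA
  | _ :: w => fun _ => Fm.varsIn_prefixFm hA w

end Prefix

lemma Separated.comap {M : Mat C ar V} {N : Mat C ar W} {π : W → V}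
    (hdesig : ∀ g, g ∈ N.desig ↔ g ∈ N.carrier ∧ π g ∈ M.desig) {X Y : Set V} {X' Y' : Set W}
    (h : Separated M X Y) (hX : ∀ g ∈ X', g ∈ N.carrier ∧ π g ∈ X)
    (hY : ∀ g ∈ Y', g ∈ N.carrier ∧ π g ∈ Y) : Separated N X' Y' := by
  have transfer : ∀ {X Y : Set V} {X' Y' : Set W}, (∀ g ∈ X', g ∈ N.carrier ∧ π g ∈ X) →
      (∀ g ∈ Y', g ∈ N.carrier ∧ π g ∈ Y) → X ⊆ M.desig → Y ⊆ M.carrier \ M.desig →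
      X' ⊆ N.desig ∧ Y' ⊆ N.carrier \ N.desig :=
    fun hX hY hXd hYn => ⟨fun g hg => (hdesig g).2 ⟨(hX g hg).1, hXd (hX g hg).2⟩,
      fun g hg => ⟨(hY g hg).1, fun hd => (hYn (hY g hg).2).2 ((hdesig g).1 hd).2⟩⟩
  rcases h with ⟨hXd, hYn⟩ | ⟨hYd, hXn⟩
  · exact .inl (transfer hX hY hXd hYn)
  · exact .inr (transfer hY hX hYd hXn)

section Sharp

variable {Sd : Set C} {M : Mat C ar V} {Ax : Set (Fm C ar ℕ)} {Th : Set (List (UC C ar Sd))}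
  {hε : [] ∈ Th}

lemma apply_mem_carrier_of_mem_sharpMat {f : ↥Th → V}
    (hf : f ∈ (sharpMat M Ax Th hε).carrier) (t : ↥Th) : f t ∈ M.carrier := by
  obtain ⟨v, hv, A, rfl⟩ := hf
  exact hv.1.1 _

lemma sharpMat_isVal_fA {v : Fm C ar ℕ → V} (hv : v ∈ ValAx M Ax) :
    (sharpMat M Ax Th hε).IsVal (fA Th v) :=
  ⟨fun A => ⟨v, hv, A, rfl⟩, fun _ As => ⟨v, hv, As, fun _ => rfl, rfl⟩⟩

lemma exists_sharpMat_isVal_var_eq {f : ↥Th → V} (hf : f ∈ (sharpMat M Ax Th hε).carrier) :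
    ∃ u, (sharpMat M Ax Th hε).IsVal u ∧ u (Fm.var 0) = f := by
  obtain ⟨v, hv, A, rfl⟩ := hf
  exact ⟨_, (sharpMat_isVal_fA hv).comp_subst fun _ => A, rfl⟩

lemma Mat.IsVal.sharpMat_eval_nil {u : Fm C ar ℕ → (↥Th → V)}
    (hu : (sharpMat M Ax Th hε).IsVal u) : M.IsVal (fun B => u B ⟨[], hε⟩) := by
  refine ⟨fun B => apply_mem_carrier_of_mem_sharpMat (hu.1 B) _, fun c As => ?_⟩
  obtain ⟨v, hv, As', hAs', hu_app⟩ := hu.2 c As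
  have hargs : (fun i => u (As i) ⟨[], hε⟩) = fun i => v (As' i) :=
    funext fun i => (congrFun (hAs' i) ⟨[], hε⟩).symm
  simp only [hu_app, hargs]
  exact hv.1.2 c As'

lemma Mat.IsVal.sharpMat_app_unary (hpc : PrefixClosed Th) {u : Fm C ar ℕ → (↥Th → V)}
    (hu : (sharpMat M Ax Th hε).IsVal u) (c : UC C ar Sd) (B : Fm C ar ℕ)
    (t : List (UC C ar Sd)) (htc : t ++ [c] ∈ Th) :
    u (prefixFm [c] B) ⟨t, hpc _ _ (List.prefix_append t [c]) htc⟩ = u B ⟨t ++ [c], htc⟩ := by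
  obtain ⟨v, hv, As, hAs, hu_app⟩ := hu.2 c.1 fun _ => B
  have i₀ : Fin (ar c.1) := ⟨0, by rw [c.2.1]; exact Nat.one_pos⟩
  calc u (prefixFm [c] B) ⟨t, _⟩ = v (prefixFm t (Fm.app c.1 As)) := congrFun hu_app _
    _ = v (prefixFm (t ++ [c]) (As i₀)) := by
      rw [prefixFm_append, app_eq_prefixFm_singleton c As i₀]
    _ = u B ⟨t ++ [c], htc⟩ := congrFun (hAs i₀) ⟨t ++ [c], htc⟩

lemma Mat.IsVal.sharpMat_prefixFm (hpc : PrefixClosed Th) {u : Fm C ar ℕ → (↥Th → V)}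
    (hu : (sharpMat M Ax Th hε).IsVal u) (B : Fm C ar ℕ) :
    ∀ (w t : List (UC C ar Sd)) (ht : t ∈ Th) (htw : t ++ w ∈ Th),
      u (prefixFm w B) ⟨t, ht⟩ = u B ⟨t ++ w, htw⟩
  | [], t, _, _ => by simp only [List.append_nil]; rfl
  | c :: w, t, _, htw => by
    have htc : t ++ [c] ∈ Th := hpc _ _ ⟨w, by simp⟩ htw
    have htcw : t ++ [c] ++ w ∈ Th := by simpa using htw
    calc u (prefixFm [c] (prefixFm w B)) ⟨t, _⟩ = u (prefixFm w B) ⟨t ++ [c], htc⟩ :=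
          hu.sharpMat_app_unary hpc c _ t htc
      _ = u B ⟨t ++ [c] ++ w, htcw⟩ := hu.sharpMat_prefixFm hpc B w _ htc htcw
      _ = u B ⟨t ++ c :: w, htw⟩ := by simp

lemma mem_sepSet_sharpMat_subst_prefixFm (hpc : PrefixClosed Th) {w : List (UC C ar Sd)}
    (hw : w ∈ Th) {S : Fm C ar ℕ} {f g : ↥Th → V}
    (hg : g ∈ sepSet (sharpMat M Ax Th hε) (S.subst fun _ => prefixFm w (Fm.var 0)) f) :
    g ∈ (sharpMat M Ax Th hε).carrier ∧ g ⟨[], hε⟩ ∈ sepSet M S (f ⟨w, hw⟩) := by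
  obtain ⟨u, hu, hu_var, rfl⟩ := hg
  refine ⟨hu.1 _, _, (hu.comp_subst _).sharpMat_eval_nil, ?_, rfl⟩
  rw [← hu_var]
  exact hu.sharpMat_prefixFm hpc _ w [] hε hw

lemma isSeparator_sharpMat_subst_prefixFm (hpc : PrefixClosed Th) {w : List (UC C ar Sd)} (hw : w ∈ Th) {S : Fm C ar ℕ} {f₁ f₂ : ↥Th → V}
    (hS : IsSeparator M S (f₁ ⟨w, hw⟩) (f₂ ⟨w, hw⟩)) :
    IsSeparator (sharpMat M Ax Th hε) (S.subst fun _ => prefixFm w (Fm.var 0)) f₁ f₂ := by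
  refine ⟨Fm.varsIn_subst (fun _ => Fm.varsIn_prefixFm (Set.mem_singleton 0) w) S,
    fun f hf => ?_, ?_⟩
  · obtain ⟨u, hu, hu_var⟩ := exists_sharpMat_isVal_var_eq hf
    exact ⟨_, u, hu, hu_var, rfl⟩
  · exact Separated.comap (π := fun g => g ⟨[], hε⟩) (fun _ => Iff.rfl) hS.2.2
      (fun _ hg => mem_sepSet_sharpMat_subst_prefixFm hpc hw hg)
      (fun _ hg => mem_sepSet_sharpMat_subst_prefixFm hpc hw hg)

lemma monadic_sharpMat (hpc : PrefixClosed Th) (hmon : Monadic M) :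
    Monadic (sharpMat M Ax Th hε) := by
  intro f₁ hf₁ f₂ hf₂ hne
  obtain ⟨⟨w, hw⟩, hw_ne⟩ := Function.ne_iff.mp hne
  obtain ⟨S, hS⟩ := hmon _ (apply_mem_carrier_of_mem_sharpMat hf₁ _) _
    (apply_mem_carrier_of_mem_sharpMat hf₂ _) hw_ne
  exact ⟨_, isSeparator_sharpMat_subst_prefixFm hpc hw hS⟩

end Sharp

theorem stmt14_general {C : Type} {ar : C → ℕ} {V : Type} {Sd : Set C}
    (M : Mat C ar V) (Ax : Set (Fm C ar ℕ))
    (Th : Set (List (UC C ar Sd))) (hε : [] ∈ Th) (hpc : PrefixClosed Th)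
    (hmon : Monadic M) :
    Monadic (sharpMat M Ax Th hε) ∧
    ∀ f₁ ∈ (sharpMat M Ax Th hε).carrier, ∀ f₂ ∈ (sharpMat M Ax Th hε).carrier,
      ∀ (w : List (UC C ar Sd)) (hw : w ∈ Th), f₁ ⟨w, hw⟩ ≠ f₂ ⟨w, hw⟩ →
        ∀ S : Fm C ar ℕ, IsSeparator M S (f₁ ⟨w, hw⟩) (f₂ ⟨w, hw⟩) →
          IsSeparator (sharpMat M Ax Th hε)
            (S.subst (fun _ => prefixFm w (Fm.var 0))) f₁ f₂ :=
  ⟨monadic_sharpMat hpc hmon,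
    fun _ _ _ _ _ hw _ _ hS => isSeparator_sharpMat_subst_prefixFm hpc hw hS⟩

/-- Proposition `monadic`: under the hypotheses of the ♯-construction,
if `M` is monadic then so is `M♯_Ax`; more precisely, if `f₁ ≠ f₂` in `V♯`, say
`f₁(w) ≠ f₂(w)` for `w ∈ Θ_Ax`, and `S` separates `f₁(w)` and `f₂(w)` in `M`, then
`R(p) = S(w p)` separates `f₁` and `f₂` in `M♯_Ax`. -/
theorem stmt14 {C : Type} {ar : C → ℕ} {V V₀ : Type} {Sd : Set C}
    (M : Mat C ar V) (hWF : M.WF) (Ax : Set (Fm C ar ℕ))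
    (M₀ : Mat C ar V₀) (hWF₀ : M₀.WF) (hdet : M₀.DetOn Sd) (hrex : IsRexpansion M M₀)
    (Th : Set (List (UC C ar Sd))) (hε : [] ∈ Th) (hpc : PrefixClosed Th)
    (hAx : ∀ B ∈ Ax, SimpleWithin Sd Th B)
    (hmon : Monadic M) :
    Monadic (sharpMat M Ax Th hε) ∧
    ∀ f₁ ∈ (sharpMat M Ax Th hε).carrier, ∀ f₂ ∈ (sharpMat M Ax Th hε).carrier,
      ∀ (w : List (UC C ar Sd)) (hw : w ∈ Th), f₁ ⟨w, hw⟩ ≠ f₂ ⟨w, hw⟩ →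
        ∀ S : Fm C ar ℕ, IsSeparator M S (f₁ ⟨w, hw⟩) (f₂ ⟨w, hw⟩) →
          IsSeparator (sharpMat M Ax Th hε)
            (S.subst (fun _ => prefixFm w (Fm.var 0))) f₁ f₂ :=
  stmt14_general M Ax Th hε hpc hmon

end PNPaper
end
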